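/- Linear stability with magnetic diffusion (Theorem 1.2). Let n ≥ 2, r > n−1, and let b̃ ∈ ℝⁿ satisfy the Diophantine condition with exponent r. Let m ≥ 0 and let U₀, B₀ ∈ H^m(𝕋ⁿ) be divergence-free with ∫_{𝕋ⁿ} U₀ dx = ∫_{𝕋ⁿ} B₀ dx = 0. Let (U,B) solve the linear system ∂ₜU = b̃·∇B, ∂ₜB − ΔB = b̃·∇U, ∇·U = ∇·B = 0, (U,B)(·,0) = (U₀,B₀) on 𝕋ⁿ. Then there is a constant C > 0 such that for every s ∈ [0,m] and t ≥ 0: ‖U(t)‖_{H^s} ≤ C(1+t)^{−(m−s)/(2(1+r))} ‖(U₀,B₀)‖_{H^m} and ‖B(t)‖_{H^s} ≤ C(1+t)^{−(1/2 + (m−s+1)/(2(1+r)))} ‖(U₀,B₀)‖_{H^m}. -/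

import Mathlib

open scoped BigOperators
open MeasureTheory

noncomputable section

namespace MHD

/-- The frequency lattice `ℤⁿ` of the torus `𝕋ⁿ = (ℝ/2πℤ)ⁿ`. -/
abbrev Freq (n : ℕ) := Fin n → ℤ

/-- Fourier coefficients of a (vector) field on `𝕋ⁿ`: a field is identified with the
family of its Fourier coefficients `f̂(k) ∈ ℂⁿ`, `k ∈ ℤⁿ`. -/
abbrev Coef (n : ℕ) := Freq n → Fin n → ℂ

/-- `|k|²`. -/
def k2 {n : ℕ} (k : Freq n) : ℝ := ∑ i, ((k i : ℝ)) ^ 2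

/-- `|k|`. -/
def knorm {n : ℕ} (k : Freq n) : ℝ := Real.sqrt (k2 k)

/-- `b̃·k`. -/
def bdot {n : ℕ} (b : Fin n → ℝ) (k : Freq n) : ℝ := ∑ i, b i * (k i : ℝ)

/-- `|b̃|`, the Euclidean norm of a constant vector. -/
def vnormR {n : ℕ} (b : Fin n → ℝ) : ℝ := Real.sqrt (∑ i, (b i) ^ 2)

/-- Squared length of a coefficient vector: `|f̂(k)|²`. -/
def vnormSq {n : ℕ} (v : Fin n → ℂ) : ℝ := ∑ i, ‖v i‖ ^ 2

/-- The Diophantine condition: `|b̃·k| ≥ c|k|^{-r}` for all `k ∈ ℤⁿ \ {0}`. -/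
def Diophantine {n : ℕ} (b : Fin n → ℝ) (r c : ℝ) : Prop :=
  ∀ k : Freq n, k ≠ 0 → c / (knorm k) ^ r ≤ |bdot b k|

/-- Squared Sobolev norm `‖f‖_{H^s}² = Σ_k (1+|k|²)^s |f̂(k)|²`. -/
def sobSq {n : ℕ} (s : ℝ) (f : Coef n) : ℝ :=
  ∑' k : Freq n, (1 + k2 k) ^ s * vnormSq (f k)

/-- Sobolev norm `‖f‖_{H^s}`. -/
def sobNorm {n : ℕ} (s : ℝ) (f : Coef n) : ℝ := Real.sqrt (sobSq s f)

/-- Squared Sobolev norm of a pair `‖(f,g)‖_{H^s}²`. -/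
def pairSobSq {n : ℕ} (s : ℝ) (f g : Coef n) : ℝ := sobSq s f + sobSq s g

/-- Sobolev norm of a pair `‖(f,g)‖_{H^s}`. -/
def pairNorm {n : ℕ} (s : ℝ) (f g : Coef n) : ℝ := Real.sqrt (pairSobSq s f g)

/-- Membership in `H^s(𝕋ⁿ)`. -/
def MemSob {n : ℕ} (s : ℝ) (f : Coef n) : Prop :=
  Summable fun k : Freq n => (1 + k2 k) ^ s * vnormSq (f k)

/-- Divergence-free: `k·f̂(k) = 0` for every `k`. -/
def DivFree {n : ℕ} (f : Coef n) : Prop :=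
  ∀ k : Freq n, (∑ i, (k i : ℂ) * f k i) = 0

/-- Fourier coefficients of the transport term `u·∇v`:
`(u·∇v)^(k) = Σ_j i (û(j)·(k-j)) v̂(k-j)`. -/
def transport {n : ℕ} (u v : Coef n) (k : Freq n) (i : Fin n) : ℂ :=
  ∑' j : Freq n, (Complex.I * ∑ l, u j l * (((k - j) l : ℤ) : ℂ)) * v (k - j) i

/-- The Helmholtz–Leray projection `P` in Fourier variables. -/
def leray {n : ℕ} (f : Coef n) (k : Freq n) (i : Fin n) : ℂ :=
  if k = 0 then f k i
  else f k i - ((∑ l, (k l : ℂ) * f k l) / (k2 k : ℂ)) * (k i : ℂ)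

/-- Fourier coefficients of `b̃·∇f`. -/
def bgrad {n : ℕ} (b : Fin n → ℝ) (f : Coef n) (k : Freq n) (i : Fin n) : ℂ :=
  Complex.I * (bdot b k : ℂ) * f k i

/-- The Fourier multiplier `Λ^s = (-Δ)^{s/2}` (acting trivially on the zero mode when `s < 0`). -/
def lam {n : ℕ} (s : ℝ) (f : Coef n) (k : Freq n) (i : Fin n) : ℂ :=
  ((knorm k ^ s : ℝ) : ℂ) * f k i

/-- Squared `L²` norm (with normalized measure), `‖f‖_{L²}² = Σ_k |f̂(k)|²`. -/
def l2Sq {n : ℕ} (f : Coef n) : ℝ := ∑' k : Freq n, vnormSq (f k)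

/-- Squared `L²` norm of `Λ^s f`: `‖Λ^s f‖_{L²}² = Σ_k |k|^{2s}|f̂(k)|²`. -/
def lamSq {n : ℕ} (s : ℝ) (f : Coef n) : ℝ := ∑' k : Freq n, (k2 k) ^ s * vnormSq (f k)

/-- The (normalized) `L²` inner product `∫_{𝕋ⁿ} f·g dx` of two real fields, via Plancherel. -/
def l2inner {n : ℕ} (f g : Coef n) : ℝ :=
  (∑' k : Freq n, ∑ i, f k i * starRingEnd ℂ (g k i)).re

/-- `‖∇f‖_{H^s}² = Σ_k (1+|k|²)^s |k|² |f̂(k)|²`. -/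
def gradSobSq {n : ℕ} (s : ℝ) (f : Coef n) : ℝ :=
  ∑' k : Freq n, (1 + k2 k) ^ s * k2 k * vnormSq (f k)

/-- `‖∇f‖_{L^∞}`: the sup over `x ∈ 𝕋ⁿ` of the (Frobenius) norm of the gradient matrix of the
field with Fourier coefficients `f`. -/
def gradLinfty {n : ℕ} (f : Coef n) : ℝ :=
  ⨆ x : Fin n → ℝ,
    Real.sqrt (∑ i, ∑ j,
      ‖∑' k : Freq n,
          Complex.exp (Complex.I * ((∑ l, (k l : ℝ) * x l : ℝ) : ℂ)) *
            (Complex.I * (k j : ℂ) * f k i)‖ ^ 2)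

/-- `‖f‖_{L^∞}`. -/
def linfty {n : ℕ} (f : Coef n) : ℝ :=
  ⨆ x : Fin n → ℝ,
    Real.sqrt (∑ i,
      ‖∑' k : Freq n,
          Complex.exp (Complex.I * ((∑ l, (k l : ℝ) * x l : ℝ) : ℂ)) * f k i‖ ^ 2)

/-- Smoothness in space (rapid decay of the Fourier coefficients at every time). -/
def Smooth {n : ℕ} (u : ℝ → Coef n) : Prop :=
  ∀ t : ℝ, ∀ N : ℕ, Summable fun k : Freq n => (1 + k2 k) ^ (N : ℝ) * vnormSq (u t k)

/-- The perturbed incompressible MHD system on `𝕋ⁿ`,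
`∂ₜu − μΔu + u·∇u + ∇p = b̃·∇b + b·∇b`,
`∂ₜb − νΔb + u·∇b = b̃·∇u + b·∇u`, `∇·u = ∇·b = 0`,
written mode-by-mode in Fourier variables. -/
structure IsMHDSolution {n : ℕ} (btil : Fin n → ℝ) (μ ν : ℝ)
    (u b : ℝ → Coef n) (p : ℝ → Freq n → ℂ) : Prop where
  du : ∀ (t : ℝ) (k : Freq n) (i : Fin n),
      HasDerivAt (fun τ : ℝ => u τ k i)
        (-(μ : ℂ) * (k2 k : ℂ) * u t k i - transport (u t) (u t) k i
          - Complex.I * (k i : ℂ) * p t k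
          + Complex.I * (bdot btil k : ℂ) * b t k i
          + transport (b t) (b t) k i) t
  db : ∀ (t : ℝ) (k : Freq n) (i : Fin n),
      HasDerivAt (fun τ : ℝ => b τ k i)
        (-(ν : ℂ) * (k2 k : ℂ) * b t k i - transport (u t) (b t) k i
          + Complex.I * (bdot btil k : ℂ) * u t k i
          + transport (b t) (u t) k i) t
  divu : ∀ t : ℝ, DivFree (u t)
  divb : ∀ t : ℝ, DivFree (b t)

/-- `|k|⁴ − 4(b̃·k)²`, the discriminant of `λ² − |k|²λ + (b̃·k)² = 0`. -/
def disc {n : ℕ} (b : Fin n → ℝ) (k : Freq n) : ℝ := (k2 k) ^ 2 - 4 * (bdot b k) ^ 2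

/-- The (complex) square root `√(|k|⁴ − 4(b̃·k)²)`. -/
def sqrtDisc {n : ℕ} (b : Fin n → ℝ) (k : Freq n) : ℂ :=
  if 0 ≤ disc b k then ((Real.sqrt (disc b k) : ℝ) : ℂ)
  else Complex.I * ((Real.sqrt (-disc b k) : ℝ) : ℂ)

/-- `λ₊(k)`. -/
def lamP {n : ℕ} (b : Fin n → ℝ) (k : Freq n) : ℂ := ((k2 k : ℂ) + sqrtDisc b k) / 2

/-- `λ₋(k)`. -/
def lamM {n : ℕ} (b : Fin n → ℝ) (k : Freq n) : ℂ := ((k2 k : ℂ) - sqrtDisc b k) / 2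

/-- The multiplier `Ĝ(k,t) = (e^{−λ₋t} − e^{−λ₊t})/(λ₊ − λ₋)`, interpreted as
`t e^{−λ₊t}` when `λ₊ = λ₋`. -/
def Ghat {n : ℕ} (b : Fin n → ℝ) (k : Freq n) (t : ℝ) : ℂ :=
  if lamP b k = lamM b k then (t : ℂ) * Complex.exp (-lamP b k * t)
  else (Complex.exp (-lamM b k * t) - Complex.exp (-lamP b k * t)) / (lamP b k - lamM b k)

/-- `|K̂₁(k,t)| = |Ĝ(k,t)| √(|λ₊|² + (b̃·k)²)`. -/
def K1abs {n : ℕ} (b : Fin n → ℝ) (k : Freq n) (t : ℝ) : ℝ :=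
  ‖Ghat b k t‖ * Real.sqrt (‖lamP b k‖ ^ 2 + (bdot b k) ^ 2)

/-- `|K̂₂(k,t)| = |K̂₁(k,t)| |b̃·k|/|λ₊|`. -/
def K2abs {n : ℕ} (b : Fin n → ℝ) (k : Freq n) (t : ℝ) : ℝ :=
  K1abs b k t * |bdot b k| / ‖lamP b k‖

/-- `|K̂₃(k,t)| = |e^{−λ₊t}|`. -/
def K3abs {n : ℕ} (b : Fin n → ℝ) (k : Freq n) (t : ℝ) : ℝ :=
  ‖Complex.exp (-lamP b k * t)‖

end MHD

/-!
In Fourier variables the system decouples, frequency by frequency and component by component,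
into the 2 × 2 systems `u' = i a b`, `b' = -κ b + i a u` with `a = b̃·k` and `κ = |k|²`.
The energy `|u|² + |b|²` is only dissipated through `b`, but adding the cross term
`a ⟪u, i b⟫` to `2 L κ` times the energy (`L = 1 + |b̃|²`) gives an equivalent functional that
decays at the rate `ρ = a² / (6 L κ)`. Feeding this back into the equation for `b` alone gives
`|b(t)|² ≲ e^{-κt} |b(0)|² + (a²/κ²) e^{-ρt} E(0)`, and since `a²/κ² ≈ ρ/κ` the second term
carries an extra factor `(1 + κ)⁻¹ (1 + t)⁻¹`. The Diophantine condition gives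
`ρ ≳ κ^{-(1+r)}`, so trading powers of `1 + κ` against `e^{-ρt}` turns the regularity gap
`m - s` into the decay `(1 + t)^{-(m-s)/(1+r)}`; summing over frequencies with the `H^m`
weights gives the estimates.
-/

open Real
open scoped RealInnerProductSpace

theorem le_mul_exp_neg_of_hasDerivAt {f f' : ℝ → ℝ} {ρ : ℝ} (hf : ∀ t, HasDerivAt f (f' t) t)
    (hf' : ∀ t, 0 ≤ t → f' t ≤ -ρ * f t) {t : ℝ} (ht : 0 ≤ t) :
    f t ≤ f 0 * exp (-(ρ * t)) := by
  have := le_gronwallBound_of_liminf_deriv_right_le (K := -ρ) (ε := 0) (b := t)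
    (fun x _ => (hf x).continuousAt.continuousWithinAt)
    (fun x _ r hr => (hf x).hasDerivWithinAt.liminf_right_slope_le hr) le_rfl
    (fun x hx => by simpa using hf' x hx.1) t ⟨ht, le_rfl⟩
  simpa [gronwallBound_ε0, neg_mul] using this

theorem le_mul_exp_neg_add_of_hasDerivAt {f f' : ℝ → ℝ} {κ ρ C : ℝ}
    (hf : ∀ t, HasDerivAt f (f' t) t) (hρκ : ρ < κ) (hC : 0 ≤ C)
    (hf' : ∀ t, 0 ≤ t → f' t ≤ -κ * f t + C * exp (-(ρ * t))) {t : ℝ} (ht : 0 ≤ t) :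
    f t ≤ f 0 * exp (-(κ * t)) + C / (κ - ρ) * exp (-(ρ * t)) := by
  set D := C / (κ - ρ)
  have hD : ρ * D + C = κ * D := by
    simp only [D]; field_simp [(sub_pos.2 hρκ).ne']; ring
  have hg : ∀ t, HasDerivAt (fun τ => f τ - D * exp (-(ρ * τ)))
      (f' t + ρ * D * exp (-(ρ * t))) t := fun t =>
    ((hf t).sub (((hasDerivAt_id t).const_mul ρ).neg.exp.const_mul D)).congr_deriv (by simp; ring)
  have := le_mul_exp_neg_of_hasDerivAt (ρ := κ) hg (fun τ hτ => by
    linear_combination hf' τ hτ + exp (-(ρ * τ)) * hD) ht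
  simp only [mul_zero, neg_zero, exp_zero, mul_one] at this
  nlinarith [div_nonneg hC (sub_pos.2 hρκ).le, exp_pos (-(κ * t))]

theorem mul_le_add_of_sq_le_mul {P Q X A B α : ℝ} (hP : 0 ≤ P) (hQ : 0 ≤ Q) (hA : 0 ≤ A)
    (hB : 0 ≤ B) (hX : X ^ 2 ≤ P * Q) (hα : α ^ 2 ≤ 4 * A * B) : α * X ≤ A * P + B * Q := by
  nlinarith [sq_nonneg (A * P - B * Q), sq_nonneg (α * X), mul_nonneg hA hP, mul_nonneg hB hQ,
    mul_nonneg (mul_nonneg hA hP) (mul_nonneg hB hQ), sq_nonneg (A * P + B * Q - α * X)]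

theorem rpow_sq_of_two_mul_eq {x y z : ℝ} (hx : 0 ≤ x) (h : 2 * y = z) : (x ^ y) ^ 2 = x ^ z := by
  rw [← rpow_mul_natCast hx, ← h]; push_cast; ring_nf

theorem exists_one_add_rpow_mul_exp_neg_le (G : ℝ) :
    ∃ C > 0, ∀ γ x : ℝ, γ ≤ G → 0 ≤ x → (1 + x) ^ γ * exp (-x) ≤ C := by
  set N := ⌈G⌉₊
  refine ⟨N.factorial * exp 1, by positivity, fun γ x hγ hx => ?_⟩
  have hpow : (1 + x) ^ γ ≤ (1 + x) ^ N := by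
    rw [← rpow_natCast]
    exact rpow_le_rpow_of_exponent_le (by linarith) (hγ.trans (Nat.le_ceil G))
  have hfac : (1 + x) ^ N ≤ N.factorial * exp (1 + x) := by
    have := pow_div_factorial_le_exp (1 + x) (by linarith) N
    rwa [div_le_iff₀ (by positivity), mul_comm] at this
  calc (1 + x) ^ γ * exp (-x) ≤ N.factorial * exp (1 + x) * exp (-x) := by
        gcongr; exact hpow.trans hfac
    _ = N.factorial * exp 1 := by rw [mul_assoc, ← exp_add]; ring_nf

theorem exists_exp_neg_mul_le_of_le_rpow_mul {β d : ℝ} (hβ : 0 < β) (hd : 0 < d) (A : ℝ) :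
    ∃ C > 0, ∀ α κ ρ t : ℝ, 0 ≤ α → α ≤ A → 1 ≤ κ → d ≤ κ ^ β * ρ → 0 ≤ t →
      exp (-(ρ * t)) ≤ C * (1 + κ) ^ α * (1 + t) ^ (-(α / β)) := by
  obtain ⟨C₀, hC₀, hC₀_le⟩ := exists_one_add_rpow_mul_exp_neg_le (A / β)
  set δ := min 1 d
  have hδ : 0 < δ := lt_min one_pos hd
  refine ⟨C₀ / δ ^ (A / β), by positivity, fun α κ ρ t hα hαA hκ hdρ ht => ?_⟩
  have hκβ : 1 ≤ κ ^ β := one_le_rpow hκ hβ.le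
  have hρ : 0 ≤ ρ := nonneg_of_mul_nonneg_right (hd.trans_le hdρ).le (by positivity)
  have hγ : 0 ≤ α / β := div_nonneg hα hβ.le
  have hγA : α / β ≤ A / β := div_le_div_of_nonneg_right hαA hβ.le
  have hscale : δ * (1 + t) ≤ κ ^ β * (1 + ρ * t) := by
    have h1 : δ ≤ 1 := min_le_left _ _
    have h2 : δ * t ≤ d * t := mul_le_mul_of_nonneg_right (min_le_right _ _) ht
    nlinarith [mul_le_mul_of_nonneg_right hdρ ht]
  have hpow : δ ^ (α / β) * (1 + t) ^ (α / β) ≤ (1 + κ) ^ α * (1 + ρ * t) ^ (α / β) := by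
    rw [← mul_rpow hδ.le (by linarith)]
    calc (δ * (1 + t)) ^ (α / β) ≤ (κ ^ β * (1 + ρ * t)) ^ (α / β) :=
          rpow_le_rpow (by positivity) hscale hγ
      _ = κ ^ α * (1 + ρ * t) ^ (α / β) := by
          rw [mul_rpow (by positivity) (by positivity), ← rpow_mul (by linarith),
            mul_div_cancel₀ _ hβ.ne']
      _ ≤ (1 + κ) ^ α * (1 + ρ * t) ^ (α / β) := by
          gcongr; linarith
  have hδγ : δ ^ (A / β) ≤ δ ^ (α / β) := rpow_le_rpow_of_exponent_ge hδ (min_le_left _ _) hγA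
  have hdecay := hC₀_le (α / β) (ρ * t) hγA (by positivity)
  rw [rpow_neg (by linarith), ← div_eq_mul_inv, le_div_iff₀ (by positivity), div_mul_eq_mul_div,
    le_div_iff₀ (by positivity)]
  calc exp (-(ρ * t)) * (1 + t) ^ (α / β) * δ ^ (A / β)
      ≤ exp (-(ρ * t)) * ((1 + t) ^ (α / β) * δ ^ (α / β)) := by
        rw [mul_assoc]; gcongr
    _ ≤ exp (-(ρ * t)) * ((1 + κ) ^ α * (1 + ρ * t) ^ (α / β)) := by
        rw [mul_comm ((1 + t) ^ _)]; gcongr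
    _ = (1 + κ) ^ α * ((1 + ρ * t) ^ (α / β) * exp (-(ρ * t))) := by ring
    _ ≤ C₀ * (1 + κ) ^ α := by rw [mul_comm C₀]; gcongr

theorem sq_div_sq_mul_exp_neg_le {a κ L t : ℝ} (hκ : 1 ≤ κ) (hL : 0 < L) (ha : a ^ 2 ≤ L * κ)
    (ht : 0 ≤ t) :
    a ^ 2 / κ ^ 2 * exp (-(a ^ 2 / (6 * L * κ) * t)) ≤
      24 * L / ((1 + κ) * (1 + t)) * exp (-(a ^ 2 / (6 * L * κ) / 2 * t)) := by
  set ρ := a ^ 2 / (6 * L * κ)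
  have hρ0 : 0 ≤ ρ := by positivity
  have hρ1 : ρ ≤ 1 := by rw [div_le_one (by positivity)]; nlinarith
  have hlin : ρ * (1 + t) * exp (-(ρ * t)) ≤ 2 * exp (-(ρ / 2 * t)) := by
    have h1 := add_one_le_exp (ρ / 2 * t)
    have h2 : exp (-(ρ * t)) = exp (-(ρ / 2 * t)) * exp (-(ρ / 2 * t)) := by
      rw [← exp_add]; ring_nf
    have h3 : exp (ρ / 2 * t) * exp (-(ρ / 2 * t)) = 1 := by rw [← exp_add]; simp
    rw [h2]
    nlinarith [exp_pos (-(ρ / 2 * t)), mul_nonneg hρ0 ht]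
  have hκρ : a ^ 2 / κ ^ 2 ≤ 12 * L / (1 + κ) * ρ := by
    simp only [ρ]
    rw [div_le_iff₀ (by positivity)]
    field_simp
    nlinarith [sq_nonneg a]
  calc a ^ 2 / κ ^ 2 * exp (-(ρ * t)) ≤ 12 * L / (1 + κ) * ρ * exp (-(ρ * t)) := by gcongr
    _ = 12 * L / ((1 + κ) * (1 + t)) * (ρ * (1 + t) * exp (-(ρ * t))) := by field_simp
    _ ≤ 12 * L / ((1 + κ) * (1 + t)) * (2 * exp (-(ρ / 2 * t))) := by gcongr
    _ = _ := by ring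

theorem one_add_rpow_mul_sq_div_sq_mul_exp_neg_le {a κ L s m β C t : ℝ} (hκ : 1 ≤ κ) (hL : 0 < L)
    (ha : a ^ 2 ≤ L * κ) (ht : 0 ≤ t)
    (hC : exp (-(a ^ 2 / (6 * L * κ) / 2 * t)) ≤
      C * (1 + κ) ^ (m - s + 1) * (1 + t) ^ (-((m - s + 1) / β))) :
    (1 + κ) ^ s * (a ^ 2 / κ ^ 2 * exp (-(a ^ 2 / (6 * L * κ) * t))) ≤
      24 * L * C * (1 + t) ^ (-(1 + (m - s + 1) / β)) * (1 + κ) ^ m := by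
  have hκ0 : 0 < 1 + κ := by linarith
  have ht0 : 0 < 1 + t := by linarith
  have hw : (1 + κ) ^ s * (1 + κ) ^ (m - s + 1) = (1 + κ) ^ m * (1 + κ) := by
    rw [← rpow_add hκ0, ← rpow_add_one hκ0.ne']; ring_nf
  have ht' : (1 + t) ^ (-((m - s + 1) / β)) = (1 + t) ^ (-(1 + (m - s + 1) / β)) * (1 + t) := by
    rw [← rpow_add_one ht0.ne']; ring_nf
  calc _ ≤ (1 + κ) ^ s * (24 * L / ((1 + κ) * (1 + t)) *
            (C * (1 + κ) ^ (m - s + 1) * (1 + t) ^ (-((m - s + 1) / β)))) :=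
        mul_le_mul_of_nonneg_left ((sq_div_sq_mul_exp_neg_le hκ hL ha ht).trans
          (mul_le_mul_of_nonneg_left hC (by positivity))) (by positivity)
    _ = 24 * L * C * ((1 + κ) ^ s * (1 + κ) ^ (m - s + 1)) *
          (1 + t) ^ (-((m - s + 1) / β)) / ((1 + κ) * (1 + t)) := by ring
    _ = _ := by rw [hw, ht']; field_simp

namespace MHD

section Lyapunov

variable {a κ L P Q X : ℝ}

theorem abs_mul_le_of_sq_le_mul (hκ : 1 ≤ κ) (hL : 1 ≤ L) (ha : a ^ 2 ≤ L * κ)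
    (hP : 0 ≤ P) (hQ : 0 ≤ Q) (hX : X ^ 2 ≤ P * Q) : |a * X| ≤ L * κ / 2 * (P + Q) := by
  have hLκ : 1 ≤ L * κ := one_le_mul_of_one_le_of_one_le hL hκ
  have key (α : ℝ) (hα : α ^ 2 = a ^ 2) : α * X ≤ L * κ / 2 * (P + Q) := by
    rw [mul_add]
    exact mul_le_add_of_sq_le_mul hP hQ (by positivity) (by positivity) hX (by nlinarith)
  rw [abs_le, neg_le, ← neg_mul]
  exact ⟨key _ (neg_sq a), key _ rfl⟩

-- Along a mode solution, with `P = ‖u‖²`, `Q = ‖b‖²` and `X = ⟪u, I b⟫`, the left side is the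
-- derivative of the functional `2 L κ (P + Q) + a X` appearing on the right.
theorem lyapunov_deriv_le (hκ : 1 ≤ κ) (hL : 1 ≤ L) (ha : a ^ 2 ≤ L * κ)
    (hP : 0 ≤ P) (hQ : 0 ≤ Q) (hX : X ^ 2 ≤ P * Q) :
    2 * L * κ * (2 * a * X + (-2 * κ * Q - 2 * a * X)) + a * (a * Q - κ * X - a * P) ≤
      -(a ^ 2 / (6 * L * κ)) * (2 * L * κ * (P + Q) + a * X) := by
  have hL0 : 0 < L := by linarith
  have hF : 2 * L * κ * (P + Q) + a * X ≤ 5 / 2 * (L * κ) * (P + Q) := by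
    linarith [(le_abs_self _).trans (abs_mul_le_of_sq_le_mul hκ hL ha hP hQ hX)]
  have hρF : a ^ 2 / (6 * L * κ) * (2 * L * κ * (P + Q) + a * X) ≤ a ^ 2 / 2 * (P + Q) := by
    calc _ ≤ a ^ 2 / (6 * L * κ) * (5 / 2 * (L * κ) * (P + Q)) := by gcongr
      _ = 5 / 12 * a ^ 2 * (P + Q) := by field_simp; ring
      _ ≤ _ := by nlinarith [mul_nonneg (sq_nonneg a) (add_nonneg hP hQ)]
  have hcross : -(a * κ) * X ≤ a ^ 2 / 2 * P + κ ^ 2 / 2 * Q :=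
    mul_le_add_of_sq_le_mul hP hQ (by positivity) (by positivity) hX (by nlinarith)
  nlinarith [mul_nonneg (mul_nonneg hL0.le (sq_nonneg κ)) hQ, mul_nonneg (sq_nonneg κ) hQ,
    mul_le_mul_of_nonneg_right ha hQ, mul_nonneg (sub_nonneg.2 hκ) (mul_nonneg hL0.le hQ)]

end Lyapunov

structure IsModeSolution (a κ : ℝ) (u b : ℝ → ℂ) : Prop where
  hasDerivAt_fst : ∀ t, HasDerivAt u (Complex.I * a * b t) t
  hasDerivAt_snd : ∀ t, HasDerivAt b (-(κ : ℂ) * b t + Complex.I * a * u t) t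

theorem sq_inner_I_mul_le (z w : ℂ) : ⟪z, Complex.I * w⟫ ^ 2 ≤ ‖z‖ ^ 2 * ‖w‖ ^ 2 := by
  have := abs_real_inner_le_norm z (Complex.I * w)
  rw [norm_mul, Complex.norm_I, one_mul] at this
  rw [← mul_pow, ← sq_abs]
  exact pow_le_pow_left₀ (abs_nonneg _) this 2

namespace IsModeSolution

variable {a κ L t : ℝ} {u b : ℝ → ℂ}

theorem hasDerivAt_normSq_fst (h : IsModeSolution a κ u b) (t : ℝ) :
    HasDerivAt (fun τ => ‖u τ‖ ^ 2) (2 * a * ⟪u t, Complex.I * b t⟫) t :=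
  (h.hasDerivAt_fst t).norm_sq.congr_deriv (by
    simp only [Complex.inner, Complex.mul_re, Complex.mul_im, Complex.conj_re, Complex.conj_im,
      Complex.I_re, Complex.I_im, Complex.ofReal_re, Complex.ofReal_im]; ring)

theorem hasDerivAt_normSq_snd (h : IsModeSolution a κ u b) (t : ℝ) :
    HasDerivAt (fun τ => ‖b τ‖ ^ 2)
      (-2 * κ * ‖b t‖ ^ 2 - 2 * a * ⟪u t, Complex.I * b t⟫) t :=
  (h.hasDerivAt_snd t).norm_sq.congr_deriv (by
    simp only [Complex.inner, Complex.mul_re, Complex.mul_im, Complex.conj_re, Complex.conj_im,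
      Complex.I_re, Complex.I_im, Complex.ofReal_re, Complex.ofReal_im, Complex.add_re,
      Complex.add_im, Complex.neg_re, Complex.neg_im, Complex.sq_norm, Complex.normSq_apply]; ring)

theorem hasDerivAt_inner (h : IsModeSolution a κ u b) (t : ℝ) :
    HasDerivAt (fun τ => ⟪u τ, Complex.I * b τ⟫)
      (a * ‖b t‖ ^ 2 - κ * ⟪u t, Complex.I * b t⟫ - a * ‖u t‖ ^ 2) t :=
  ((h.hasDerivAt_fst t).inner ℝ ((h.hasDerivAt_snd t).const_mul Complex.I)).congr_deriv (by
    simp only [Complex.inner, Complex.mul_re, Complex.mul_im, Complex.conj_re, Complex.conj_im,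
      Complex.I_re, Complex.I_im, Complex.ofReal_re, Complex.ofReal_im, Complex.add_re,
      Complex.add_im, Complex.neg_re, Complex.neg_im, Complex.sq_norm, Complex.normSq_apply]; ring)

theorem energy_le (h : IsModeSolution a κ u b) (hκ : 1 ≤ κ) (hL : 1 ≤ L) (ha : a ^ 2 ≤ L * κ)
    (ht : 0 ≤ t) :
    ‖u t‖ ^ 2 + ‖b t‖ ^ 2 ≤ 2 * (‖u 0‖ ^ 2 + ‖b 0‖ ^ 2) * exp (-(a ^ 2 / (6 * L * κ) * t)) := by
  have hX τ := sq_inner_I_mul_le (u τ) (b τ)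
  have hF_equiv τ := abs_le.1 <|
    abs_mul_le_of_sq_le_mul hκ hL ha (sq_nonneg ‖u τ‖) (sq_nonneg ‖b τ‖) (hX τ)
  have hF : ∀ τ, HasDerivAt
      (fun τ => 2 * L * κ * (‖u τ‖ ^ 2 + ‖b τ‖ ^ 2) + a * ⟪u τ, Complex.I * b τ⟫) _ τ := fun τ =>
    (((h.hasDerivAt_normSq_fst τ).add (h.hasDerivAt_normSq_snd τ)).const_mul
      (2 * L * κ)).add ((h.hasDerivAt_inner τ).const_mul a)
  have hdecay := le_mul_exp_neg_of_hasDerivAt hF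
    (fun τ _ => lyapunov_deriv_le hκ hL ha (sq_nonneg _) (sq_nonneg _) (hX τ)) ht
  have hLκ : 0 < L * κ := by nlinarith
  nlinarith [(hF_equiv t).1, (hF_equiv 0).2, exp_pos (-(a ^ 2 / (6 * L * κ) * t))]

theorem normSq_snd_le (h : IsModeSolution a κ u b) (hκ : 1 ≤ κ) (hL : 1 ≤ L)
    (ha : a ^ 2 ≤ L * κ) (ht : 0 ≤ t) :
    ‖b t‖ ^ 2 ≤ ‖b 0‖ ^ 2 * exp (-(κ * t)) +
      4 * (a ^ 2 / κ ^ 2) * (‖u 0‖ ^ 2 + ‖b 0‖ ^ 2) * exp (-(a ^ 2 / (6 * L * κ) * t)) := by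
  have hκ0 : 0 < κ := by linarith
  have hρ : a ^ 2 / (6 * L * κ) ≤ κ / 2 := by
    rw [div_le_iff₀ (by positivity)]; nlinarith
  have hforced := le_mul_exp_neg_add_of_hasDerivAt h.hasDerivAt_normSq_snd (κ := κ)
    (ρ := a ^ 2 / (6 * L * κ)) (C := 2 * (a ^ 2 / κ) * (‖u 0‖ ^ 2 + ‖b 0‖ ^ 2))
    (by linarith) (by positivity) (fun τ hτ => by
      have hcross := mul_le_add_of_sq_le_mul (α := -2 * a) (sq_nonneg _) (sq_nonneg _)
        (div_nonneg (sq_nonneg a) hκ0.le) hκ0.le (sq_inner_I_mul_le (u τ) (b τ))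
        (le_of_eq (by field_simp; ring))
      have hu := (le_add_of_nonneg_right (sq_nonneg ‖b τ‖)).trans (h.energy_le hκ hL ha hτ)
      nlinarith [mul_le_mul_of_nonneg_left hu (div_nonneg (sq_nonneg a) hκ0.le)]) ht
  refine hforced.trans (add_le_add le_rfl (mul_le_mul_of_nonneg_right ?_ (exp_pos _).le))
  rw [div_le_iff₀ (by linarith), show a ^ 2 / κ = a ^ 2 / κ ^ 2 * κ by field_simp]
  nlinarith [show 0 ≤ a ^ 2 / κ ^ 2 * (‖u 0‖ ^ 2 + ‖b 0‖ ^ 2) by positivity]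

end IsModeSolution

section WeightedDecay

variable {β d L : ℝ}

theorem exists_weighted_normSq_fst_le (hβ : 0 < β) (hd : 0 < d) (hL : 1 ≤ L) (m : ℝ) :
    ∃ C > 0, ∀ (a κ s t : ℝ) (u b : ℝ → ℂ), IsModeSolution a κ u b → 1 ≤ κ →
      a ^ 2 ≤ L * κ → d ≤ κ ^ β * (a ^ 2 / (6 * L * κ)) → 0 ≤ s → s ≤ m → 0 ≤ t →
      (1 + κ) ^ s * ‖u t‖ ^ 2 ≤
        (C * (1 + t) ^ (-((m - s) / (2 * β)))) ^ 2 * (1 + κ) ^ m * (‖u 0‖ ^ 2 + ‖b 0‖ ^ 2) := by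
  obtain ⟨C, hC, hC_le⟩ := exists_exp_neg_mul_le_of_le_rpow_mul hβ hd m
  refine ⟨√(2 * C), by positivity, fun a κ s t u b h hκ ha hd' hs hsm ht => ?_⟩
  have hdecay := hC_le (m - s) κ _ t (by linarith) (by linarith) hκ hd' ht
  have hu := (le_add_of_nonneg_right (sq_nonneg ‖b t‖)).trans (h.energy_le hκ hL ha ht)
  have hweight : (1 + κ) ^ s * (1 + κ) ^ (m - s) = (1 + κ) ^ m := by
    rw [← rpow_add (by linarith)]; ring_nf
  have htime : ((1 + t) ^ (-((m - s) / (2 * β)))) ^ 2 = (1 + t) ^ (-((m - s) / β)) :=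
    rpow_sq_of_two_mul_eq (by linarith) (by field_simp)
  calc (1 + κ) ^ s * ‖u t‖ ^ 2
      ≤ (1 + κ) ^ s * (2 * (‖u 0‖ ^ 2 + ‖b 0‖ ^ 2) *
          (C * (1 + κ) ^ (m - s) * (1 + t) ^ (-((m - s) / β)))) := by
        gcongr; exact hu.trans (by gcongr)
    _ = _ := by
        rw [mul_pow, sq_sqrt (by positivity), htime, ← hweight]; ring

theorem exists_weighted_normSq_snd_le (hβ : 0 < β) (hd : 0 < d) (hL : 1 ≤ L) (m : ℝ) :
    ∃ C > 0, ∀ (a κ s t : ℝ) (u b : ℝ → ℂ), IsModeSolution a κ u b → 1 ≤ κ →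
      a ^ 2 ≤ L * κ → d ≤ κ ^ β * (a ^ 2 / (6 * L * κ)) → 0 ≤ s → s ≤ m → 0 ≤ t →
      (1 + κ) ^ s * ‖b t‖ ^ 2 ≤
        (C * (1 + t) ^ (-(1 / 2 + (m - s + 1) / (2 * β)))) ^ 2 * (1 + κ) ^ m *
          (‖u 0‖ ^ 2 + ‖b 0‖ ^ 2) := by
  obtain ⟨C₀, hC₀, hC₀_le⟩ := exists_one_add_rpow_mul_exp_neg_le (1 + (m + 1) / β)
  obtain ⟨C₁, hC₁, hC₁_le⟩ := exists_exp_neg_mul_le_of_le_rpow_mul hβ (half_pos hd) (m + 1)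
  refine ⟨√(C₀ + 96 * L * C₁), by positivity, fun a κ s t u b h hκ ha hd' hs hsm ht => ?_⟩
  set ρ := a ^ 2 / (6 * L * κ)
  set γ := 1 + (m - s + 1) / β
  set E₀ := ‖u 0‖ ^ 2 + ‖b 0‖ ^ 2
  have ht0 : 0 < 1 + t := by linarith
  have hdiss : (1 + κ) ^ s * ‖b 0‖ ^ 2 * exp (-(κ * t)) ≤
      C₀ * (1 + t) ^ (-γ) * (1 + κ) ^ m * E₀ := by
    have h1 := hC₀_le γ t (by simp only [γ]; gcongr; linarith) ht
    have h2 : exp (-(κ * t)) ≤ C₀ * (1 + t) ^ (-γ) := by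
      rw [rpow_neg ht0.le, ← div_eq_mul_inv, le_div_iff₀ (by positivity)]
      refine le_trans ?_ h1
      rw [mul_comm]; gcongr; nlinarith
    have h3 : (1 + κ) ^ s ≤ (1 + κ) ^ m := rpow_le_rpow_of_exponent_le (by linarith) hsm
    have h4 : ‖b 0‖ ^ 2 ≤ E₀ := le_add_of_nonneg_left (sq_nonneg _)
    calc _ ≤ (1 + κ) ^ m * E₀ * (C₀ * (1 + t) ^ (-γ)) := by gcongr
      _ = _ := by ring
  have hcoup := one_add_rpow_mul_sq_div_sq_mul_exp_neg_le hκ (by linarith) ha ht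
    (hC₁_le (m - s + 1) κ (ρ / 2) t (by linarith) (by linarith) hκ
      (by rw [mul_div_assoc']; gcongr) ht)
  have htime : ((1 + t) ^ (-(1 / 2 + (m - s + 1) / (2 * β)))) ^ 2 = (1 + t) ^ (-γ) :=
    rpow_sq_of_two_mul_eq ht0.le (by simp only [γ]; field_simp)
  calc (1 + κ) ^ s * ‖b t‖ ^ 2
      ≤ (1 + κ) ^ s * (‖b 0‖ ^ 2 * exp (-(κ * t)) +
          4 * (a ^ 2 / κ ^ 2) * E₀ * exp (-(ρ * t))) := by
        gcongr; exact h.normSq_snd_le hκ hL ha ht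
    _ = (1 + κ) ^ s * ‖b 0‖ ^ 2 * exp (-(κ * t)) +
          4 * E₀ * ((1 + κ) ^ s * (a ^ 2 / κ ^ 2 * exp (-(ρ * t)))) := by ring
    _ ≤ C₀ * (1 + t) ^ (-γ) * (1 + κ) ^ m * E₀ +
          4 * E₀ * (24 * L * C₁ * (1 + t) ^ (-γ) * (1 + κ) ^ m) := by gcongr
    _ = _ := by rw [mul_pow, sq_sqrt (by positivity), htime]; ring

end WeightedDecay

variable {n : ℕ}

theorem k2_nonneg (k : Freq n) : 0 ≤ k2 k := Finset.sum_nonneg fun _ _ => sq_nonneg _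

theorem vnormSq_nonneg (v : Fin n → ℂ) : 0 ≤ vnormSq v := Finset.sum_nonneg fun _ _ => sq_nonneg _

theorem one_le_k2 {k : Freq n} (hk : k ≠ 0) : 1 ≤ k2 k := by
  obtain ⟨i, hi⟩ := Function.ne_iff.mp hk
  have h1 : (1 : ℝ) ≤ |(k i : ℝ)| := by exact_mod_cast Int.one_le_abs hi
  have : (1 : ℝ) ≤ (k i : ℝ) ^ 2 := by nlinarith [sq_abs (k i : ℝ)]
  exact this.trans (Finset.single_le_sum (f := fun j => (k j : ℝ) ^ 2)
    (fun j _ => sq_nonneg _) (Finset.mem_univ i))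

theorem bdot_sq_le (b : Fin n → ℝ) (k : Freq n) : bdot b k ^ 2 ≤ (1 + ∑ i, b i ^ 2) * k2 k :=
  calc bdot b k ^ 2 ≤ (∑ i, b i ^ 2) * k2 k := Finset.sum_mul_sq_le_sq_mul_sq _ _ _
    _ ≤ _ := by nlinarith [k2_nonneg k]

theorem Diophantine.le_rpow_mul {b : Fin n → ℝ} {r c : ℝ} (hdio : Diophantine b r c)
    (hc : 0 ≤ c) {k : Freq n} (hk : k ≠ 0) {L : ℝ} (hL : 0 < L) :
    c ^ 2 / (6 * L) ≤ k2 k ^ (1 + r) * (bdot b k ^ 2 / (6 * L * k2 k)) := by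
  have hκ : 0 < k2 k := one_pos.trans_le (one_le_k2 hk)
  have hnorm : knorm k ^ r = k2 k ^ (r / 2) := by
    rw [knorm, sqrt_eq_rpow, ← rpow_mul hκ.le]; ring_nf
  have h1 : c ≤ |bdot b k| * k2 k ^ (r / 2) := by
    have := hdio k hk
    rwa [hnorm, div_le_iff₀ (by positivity)] at this
  have h2 : c ^ 2 ≤ bdot b k ^ 2 * k2 k ^ r := by
    calc c ^ 2 ≤ (|bdot b k| * k2 k ^ (r / 2)) ^ 2 := pow_le_pow_left₀ hc h1 2
      _ = _ := by rw [mul_pow, sq_abs, rpow_sq_of_two_mul_eq hκ.le (by ring)]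
  rw [rpow_add hκ, rpow_one]
  calc c ^ 2 / (6 * L) ≤ bdot b k ^ 2 * k2 k ^ r / (6 * L) := by gcongr
    _ = _ := by field_simp

theorem mul_vnormSq_le {w C : ℝ} {f g h : Fin n → ℂ}
    (H : ∀ i, w * ‖f i‖ ^ 2 ≤ C * (‖g i‖ ^ 2 + ‖h i‖ ^ 2)) :
    w * vnormSq f ≤ C * (vnormSq g + vnormSq h) := by
  simp only [vnormSq, Finset.mul_sum, ← Finset.sum_add_distrib]
  exact Finset.sum_le_sum fun i _ => H i

theorem sobNorm_le_mul_pairNorm {s m C : ℝ} {f g h : Coef n} (hC : 0 ≤ C) (hg : MemSob m g)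
    (hh : MemSob m h) (hf0 : f 0 = 0)
    (hf : ∀ k ≠ 0, (1 + k2 k) ^ s * vnormSq (f k) ≤
      C ^ 2 * (1 + k2 k) ^ m * (vnormSq (g k) + vnormSq (h k))) :
    sobNorm s f ≤ C * pairNorm m g h := by
  have hle : ∀ k, (1 + k2 k) ^ s * vnormSq (f k) ≤
      C ^ 2 * ((1 + k2 k) ^ m * vnormSq (g k) + (1 + k2 k) ^ m * vnormSq (h k)) := fun k => by
    rcases eq_or_ne k 0 with rfl | hk
    · have hw : 0 ≤ (1 + k2 (0 : Freq n)) ^ m :=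
        rpow_nonneg (by linarith [k2_nonneg (0 : Freq n)]) _
      rw [hf0, show vnormSq (0 : Fin n → ℂ) = 0 by simp [vnormSq], mul_zero]
      exact mul_nonneg (sq_nonneg C)
        (add_nonneg (mul_nonneg hw (vnormSq_nonneg _)) (mul_nonneg hw (vnormSq_nonneg _)))
    · rw [← mul_add, ← mul_assoc]; exact hf k hk
  have hsum := (hg.add hh).mul_left (C ^ 2)
  have hsob : sobSq s f ≤ C ^ 2 * pairSobSq m g h := by
    rw [pairSobSq, sobSq, sobSq, sobSq, ← hg.tsum_add hh, ← tsum_mul_left]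
    exact (hsum.of_nonneg_of_le (fun k => mul_nonneg (rpow_nonneg (by linarith [k2_nonneg k]) _)
      (vnormSq_nonneg _)) hle).tsum_le_tsum hle hsum
  calc sobNorm s f ≤ √(C ^ 2 * pairSobSq m g h) := sqrt_le_sqrt hsob
    _ = _ := by rw [sqrt_mul (sq_nonneg C), sqrt_sq hC, pairNorm]

def IsLinearSolution (b : Fin n → ℝ) (U B : ℝ → Coef n) : Prop :=
  ∀ k i, IsModeSolution (bdot b k) (k2 k) (fun τ => U τ k i) (fun τ => B τ k i)

theorem IsLinearSolution.zero_mode_eq {b : Fin n → ℝ} {U B : ℝ → Coef n}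
    (h : IsLinearSolution b U B) (t : ℝ) : U t 0 = U 0 0 ∧ B t 0 = B 0 0 := by
  have hb : bdot b 0 = 0 := by simp [bdot]
  have hk : k2 (0 : Freq n) = 0 := by simp [k2]
  have h0 i : IsModeSolution 0 0 (fun τ => U τ 0 i) (fun τ => B τ 0 i) := by
    simpa only [hb, hk] using h 0 i
  constructor <;> funext i
  · exact is_const_of_deriv_eq_zero (fun x => ((h0 i).hasDerivAt_fst x).differentiableAt)
      (fun x => by simpa using ((h0 i).hasDerivAt_fst x).deriv) t 0
  · exact is_const_of_deriv_eq_zero (fun x => ((h0 i).hasDerivAt_snd x).differentiableAt)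
      (fun x => by simpa using ((h0 i).hasDerivAt_snd x).deriv) t 0

end MHD

open MHD in
theorem linear_stability_magnetic_diffusion_general
    (n : ℕ) (r c : ℝ) (hr : (n : ℝ) - 1 < r) (hc : 0 < c)
    (btil : Fin n → ℝ) (hdio : Diophantine btil r c)
    (m : ℝ)
    (U₀ B₀ : Coef n) (hU₀ : MemSob m U₀) (hB₀ : MemSob m B₀)
    (hmeanU₀ : U₀ 0 = 0) (hmeanB₀ : B₀ 0 = 0)
    (U B : ℝ → Coef n)
    (hU : ∀ (t : ℝ) (k : Freq n) (i : Fin n),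
      HasDerivAt (fun τ : ℝ => U τ k i)
        (Complex.I * (bdot btil k : ℂ) * B t k i) t)
    (hB : ∀ (t : ℝ) (k : Freq n) (i : Fin n),
      HasDerivAt (fun τ : ℝ => B τ k i)
        (-(k2 k : ℂ) * B t k i + Complex.I * (bdot btil k : ℂ) * U t k i) t)
    (hIU : U 0 = U₀) (hIB : B 0 = B₀) :
    ∃ C > 0, ∀ s : ℝ, 0 ≤ s → s ≤ m → ∀ t : ℝ, 0 ≤ t →
      sobNorm s (U t) ≤
        C * (1 + t) ^ (-((m - s) / (2 * (1 + r)))) * pairNorm m U₀ B₀ ∧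
      sobNorm s (B t) ≤
        C * (1 + t) ^ (-(1 / 2 + (m - s + 1) / (2 * (1 + r)))) * pairNorm m U₀ B₀ := by
  subst hIU hIB
  have hsol : IsLinearSolution btil U B := fun k i => ⟨fun t => hU t k i, fun t => hB t k i⟩
  have hL : 1 ≤ 1 + ∑ i, btil i ^ 2 := le_add_of_nonneg_right (by positivity)
  have hβ : 0 < 1 + r := by linarith [(Nat.cast_nonneg n : (0 : ℝ) ≤ n)]
  have hd : 0 < c ^ 2 / (6 * (1 + ∑ i, btil i ^ 2)) := by positivity
  have hrate {k : Freq n} (hk : k ≠ 0) :=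
    hdio.le_rpow_mul hc.le hk (L := 1 + ∑ i, btil i ^ 2) (by linarith)
  obtain ⟨CU, hCU, hUk⟩ := exists_weighted_normSq_fst_le hβ hd hL m
  obtain ⟨CB, hCB, hBk⟩ := exists_weighted_normSq_snd_le hβ hd hL m
  refine ⟨max CU CB, lt_max_of_lt_left hCU, fun s hs hsm t ht => ⟨?_, ?_⟩⟩
  · refine (sobNorm_le_mul_pairNorm (by positivity) hU₀ hB₀
      ((hsol.zero_mode_eq t).1.trans hmeanU₀) fun k hk => mul_vnormSq_le fun i =>
        hUk _ _ s t _ _ (hsol k i) (one_le_k2 hk) (bdot_sq_le btil k) (hrate hk) hs hsm ht).trans ?_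
    exact mul_le_mul_of_nonneg_right (by gcongr; exact le_max_left _ _) (sqrt_nonneg _)
  · refine (sobNorm_le_mul_pairNorm (by positivity) hU₀ hB₀
      ((hsol.zero_mode_eq t).2.trans hmeanB₀) fun k hk => mul_vnormSq_le fun i =>
        hBk _ _ s t _ _ (hsol k i) (one_le_k2 hk) (bdot_sq_le btil k) (hrate hk) hs hsm ht).trans ?_
    exact mul_le_mul_of_nonneg_right (by gcongr; exact le_max_right _ _) (sqrt_nonneg _)

open MHD in
/-- **Linear stability II** (magnetic diffusion, `μ = 0`, `ν = 1`): decay of solutions of the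
linearized system `∂ₜU = b̃·∇B`, `∂ₜB − ΔB = b̃·∇U`, `∇·U = ∇·B = 0` on `𝕋ⁿ`. -/
theorem linear_stability_magnetic_diffusion
    (n : ℕ) (hn : 2 ≤ n) (r c : ℝ) (hr : (n : ℝ) - 1 < r) (hc : 0 < c)
    (btil : Fin n → ℝ) (hdio : Diophantine btil r c)
    (m : ℝ) (hm : 0 ≤ m)
    (U₀ B₀ : Coef n) (hU₀ : MemSob m U₀) (hB₀ : MemSob m B₀)
    (hdivU₀ : DivFree U₀) (hdivB₀ : DivFree B₀)
    (hmeanU₀ : U₀ 0 = 0) (hmeanB₀ : B₀ 0 = 0)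
    (U B : ℝ → Coef n)
    (hU : ∀ (t : ℝ) (k : Freq n) (i : Fin n),
      HasDerivAt (fun τ : ℝ => U τ k i)
        (Complex.I * (bdot btil k : ℂ) * B t k i) t)
    (hB : ∀ (t : ℝ) (k : Freq n) (i : Fin n),
      HasDerivAt (fun τ : ℝ => B τ k i)
        (-(k2 k : ℂ) * B t k i + Complex.I * (bdot btil k : ℂ) * U t k i) t)
    (hdivU : ∀ t : ℝ, DivFree (U t)) (hdivB : ∀ t : ℝ, DivFree (B t))
    (hIU : U 0 = U₀) (hIB : B 0 = B₀) :
    ∃ C > 0, ∀ s : ℝ, 0 ≤ s → s ≤ m → ∀ t : ℝ, 0 ≤ t →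
      sobNorm s (U t) ≤
        C * (1 + t) ^ (-((m - s) / (2 * (1 + r)))) * pairNorm m U₀ B₀ ∧
      sobNorm s (B t) ≤
        C * (1 + t) ^ (-(1 / 2 + (m - s + 1) / (2 * (1 + r)))) * pairNorm m U₀ B₀ :=
  linear_stability_magnetic_diffusion_general n r c hr hc btil hdio m U₀ B₀ hU₀ hB₀ hmeanU₀ hmeanB₀
    U B hU hB hIU hIB
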